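/- For every graph G of order n, |μₙ(G)| + |μₙ(Ḡ)| ≤ (√3/2)·n, where μₙ denotes the smallest adjacency eigenvalue. -/

import Mathlib

open Matrix SimpleGraph

/-- The eigenvalues of the adjacency matrix of `G`, in descending order:
`graphEig G i` is the `(i+1)`-th largest eigenvalue. -/
noncomputable def graphEig {n : ℕ} (G : SimpleGraph (Fin n)) (i : Fin n) : ℝ :=
  letI := Classical.decRel G.Adj
  letI hH : (G.adjMatrix ℝ).IsHermitian := by rw [Matrix.IsHermitian, conjTranspose_eq_transpose_of_trivial]; exact G.isSymm_adjMatrix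
  hH.eigenvalues (Tuple.sort hH.eigenvalues i.rev)

/-!
Let `x`, `y` be unit eigenvectors for `μ = μₙ(G) ≤ 0` and `ν = μₙ(Gᶜ) ≤ 0`. Writing
`x = x⁺ - x⁻`, we get `-μ ≤ 2 ∑ x⁺ᵢ x⁻ⱼ`, the sum running over the ordered edges `ij` of `G`
with `xᵢ ≥ 0 > xⱼ`, and Cauchy–Schwarz with `‖x⁺‖² ‖x⁻‖² ≤ 1/4` bounds `μ²` by the number of
these edges. An unordered pair of vertices is an edge of exactly one of `G`, `Gᶜ`, and it is
counted (in one orientation) only if its ends lie in different classes of the partition of the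
vertices by the signs of `(x, y)`. A partition into four classes separates at most `3n²/8`
pairs, so `μ² + ν² ≤ 3n²/8`.
-/

open Finset

section LinearOrderedCommRing

variable {α : Type*} [CommRing α] [LinearOrder α] [IsStrictOrderedRing α]

theorem posPart_sq_add_negPart_sq (a : α) : a⁺ ^ 2 + a⁻ ^ 2 = a ^ 2 := by
  rcases le_total 0 a with h | h
  · simp [posPart_eq_self.2 h, negPart_eq_zero.2 h]
  · simp [posPart_eq_zero.2 h, negPart_eq_neg.2 h]

theorem neg_mul_le_posPart_mul_negPart_add (a b : α) : -(a * b) ≤ a⁺ * b⁻ + b⁺ * a⁻ := by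
  calc -(a * b) = -((a⁺ - a⁻) * (b⁺ - b⁻)) := by rw [posPart_sub_negPart, posPart_sub_negPart]
    _ ≤ a⁺ * b⁻ + b⁺ * a⁻ := by
      nlinarith [mul_nonneg (posPart_nonneg a) (posPart_nonneg b),
        mul_nonneg (negPart_nonneg a) (negPart_nonneg b)]

end LinearOrderedCommRing

theorem sq_sum_posPart_mul_negPart_le {ι : Type*} [Fintype ι] (x : ι → ℝ) (s : Finset (ι × ι)) :
    (∑ p ∈ s, (x p.1)⁺ * (x p.2)⁻) ^ 2 ≤ #s * (x ⬝ᵥ x) ^ 2 / 4 := by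
  set P := ∑ i, (x i)⁺ ^ 2
  set N := ∑ i, (x i)⁻ ^ 2
  have hPN : P + N = x ⬝ᵥ x := by
    simp only [P, N, ← sum_add_distrib, posPart_sq_add_negPart_sq, dotProduct, ← sq]
  have hsub : ∑ p ∈ s, ((x p.1)⁺ * (x p.2)⁻) ^ 2 ≤ P * N := by
    rw [sum_mul_sum, ← sum_product']
    simp_rw [← mul_pow]
    exact sum_le_sum_of_subset_of_nonneg (subset_univ s) fun _ _ _ => by positivity
  calc (∑ p ∈ s, (x p.1)⁺ * (x p.2)⁻) ^ 2
      ≤ #s * ∑ p ∈ s, ((x p.1)⁺ * (x p.2)⁻) ^ 2 := sq_sum_le_card_mul_sum_sq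
    _ ≤ #s * (P * N) := by gcongr
    _ ≤ #s * (x ⬝ᵥ x) ^ 2 / 4 := by
      rw [← hPN, mul_div_assoc]; gcongr; nlinarith [sq_nonneg (P - N)]

theorem card_sq_le_card_mul_card_filter_eq {V α : Type*} [Fintype V] [Fintype α] [DecidableEq α]
    (f : V → α) : Fintype.card V ^ 2 ≤ Fintype.card α * #{p : V × V | f p.1 = f p.2} := by
  have hfib : #{p : V × V | f p.1 = f p.2} = ∑ a, #{i | f i = a} ^ 2 := by
    rw [card_eq_sum_card_fiberwise (f := fun p : V × V => f p.1) (t := univ) (by simp)]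
    refine sum_congr rfl fun a _ => ?_
    rw [sq, ← card_product]
    congr 1; ext ⟨i, j⟩
    simp only [mem_filter, mem_univ, true_and, mem_product]
    exact ⟨fun ⟨h, ha⟩ => ⟨ha, h ▸ ha⟩, fun ⟨hi, hj⟩ => ⟨hi.trans hj.symm, hi⟩⟩
  have hsum : ∑ a, #{i | f i = a} = Fintype.card V := by
    rw [← card_eq_sum_card_fiberwise (by simp)]; rfl
  rw [hfib, ← hsum]
  exact sq_sum_le_card_mul_sum_sq

namespace SimpleGraph

variable {V : Type*} [Fintype V] (G : SimpleGraph V) [DecidableRel G.Adj]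

noncomputable def signCut (x : V → ℝ) : Finset (V × V) :=
  {p | G.Adj p.1 p.2 ∧ 0 ≤ x p.1 ∧ x p.2 < 0}

theorem sum_signCut_posPart_mul_negPart (x : V → ℝ) :
    ∑ p ∈ G.signCut x, (x p.1)⁺ * (x p.2)⁻ =
      ∑ i, ∑ j, if G.Adj i j then (x i)⁺ * (x j)⁻ else 0 := by
  rw [signCut, sum_filter, ← univ_product_univ, sum_product]
  refine sum_congr rfl fun i _ => sum_congr rfl fun j _ => ?_
  by_cases hi : 0 ≤ x i
  · by_cases hj : x j < 0
    · simp [hi, hj]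
    · simp [hi, hj, negPart_eq_zero.2 (not_lt.1 hj)]
  · simp [hi, posPart_eq_zero.2 (not_le.1 hi).le]

theorem neg_dotProduct_adjMatrix_mulVec_le (x : V → ℝ) :
    -(x ⬝ᵥ G.adjMatrix ℝ *ᵥ x) ≤ 2 * ∑ p ∈ G.signCut x, (x p.1)⁺ * (x p.2)⁻ := by
  set P : V → V → ℝ := fun i j => if G.Adj i j then (x i)⁺ * (x j)⁻ else 0
  have hpair : ∀ i j, -(if G.Adj i j then x i * x j else 0) ≤ P i j + P j i := by
    intro i j
    by_cases h : G.Adj i j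
    · simp only [P, h, h.symm, if_true]
      exact neg_mul_le_posPart_mul_negPart_add (x i) (x j)
    · have h' : ¬G.Adj j i := fun h' => h h'.symm
      simp [P, h, h']
  calc -(x ⬝ᵥ G.adjMatrix ℝ *ᵥ x)
      = ∑ i, ∑ j, -(if G.Adj i j then x i * x j else 0) := by
        simp [dotProduct_mulVec_adjMatrix]
    _ ≤ ∑ i, ∑ j, (P i j + P j i) := by gcongr with i _ j _; exact hpair i j
    _ = 2 * ∑ p ∈ G.signCut x, (x p.1)⁺ * (x p.2)⁻ := by
        rw [sum_signCut_posPart_mul_negPart]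
        simp only [sum_add_distrib]
        rw [sum_comm (f := fun i j => P j i)]
        ring

theorem sq_dotProduct_adjMatrix_mulVec_le (x : V → ℝ) (hx : x ⬝ᵥ G.adjMatrix ℝ *ᵥ x ≤ 0) :
    (x ⬝ᵥ G.adjMatrix ℝ *ᵥ x) ^ 2 ≤ #(G.signCut x) * (x ⬝ᵥ x) ^ 2 := by
  have hW := G.neg_dotProduct_adjMatrix_mulVec_le x
  have hCS := sq_sum_posPart_mul_negPart_le x (G.signCut x)
  calc (x ⬝ᵥ G.adjMatrix ℝ *ᵥ x) ^ 2 = (-(x ⬝ᵥ G.adjMatrix ℝ *ᵥ x)) ^ 2 := (neg_sq _).symm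
    _ ≤ (2 * ∑ p ∈ G.signCut x, (x p.1)⁺ * (x p.2)⁻) ^ 2 :=
        pow_le_pow_left₀ (neg_nonneg.2 hx) hW 2
    _ ≤ #(G.signCut x) * (x ⬝ᵥ x) ^ 2 := by linarith

theorem card_adj_sign_ne_eq_two_mul_card_signCut (x : V → ℝ) :
    #{p : V × V | G.Adj p.1 p.2 ∧ (0 ≤ x p.1 ↔ x p.2 < 0)} = 2 * #(G.signCut x) := by
  have hdisj : Disjoint (G.signCut x) ((G.signCut x).map (Equiv.prodComm V V).toEmbedding) := by
    simp only [Finset.disjoint_left, signCut, mem_filter, mem_map_equiv, mem_univ, true_and]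
    grind
  have hsplit : ({p : V × V | G.Adj p.1 p.2 ∧ (0 ≤ x p.1 ↔ x p.2 < 0)} : Finset (V × V)) =
      (G.signCut x).disjUnion ((G.signCut x).map (Equiv.prodComm V V).toEmbedding) hdisj := by
    ext ⟨i, j⟩
    simp only [signCut, mem_disjUnion, mem_filter, mem_univ, true_and, mem_map_equiv,
      Equiv.prodComm_symm, Equiv.prodComm_apply, Prod.swap_prod_mk]
    grind [G.adj_comm i j]
  rw [hsplit, card_disjUnion, card_map, two_mul]

noncomputable def signPattern (x y : V → ℝ) (i : V) : Bool × Bool :=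
  (decide (0 ≤ x i), decide (0 ≤ y i))

theorem two_mul_card_signCut_add_card_signCut_compl_le [DecidableEq V] (x y : V → ℝ) :
    2 * (#(G.signCut x) + #(Gᶜ.signCut y)) ≤
      #{p : V × V | signPattern x y p.1 ≠ signPattern x y p.2} := by
  rw [mul_add, ← card_adj_sign_ne_eq_two_mul_card_signCut,
    ← card_adj_sign_ne_eq_two_mul_card_signCut, ← card_union_of_disjoint]
  · apply card_le_card
    intro p
    simp only [signPattern, mem_union, mem_filter, mem_univ, true_and, ne_eq, Prod.mk.injEq,
      decide_eq_decide]
    grind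
  · simp only [Finset.disjoint_left, mem_filter, mem_univ, true_and, compl_adj]
    grind

theorem card_signCut_add_card_signCut_compl_le [DecidableEq V] (x y : V → ℝ) :
    (#(G.signCut x) + #(Gᶜ.signCut y) : ℝ) ≤ 3 * Fintype.card V ^ 2 / 8 := by
  have hne := G.two_mul_card_signCut_add_card_signCut_compl_le x y
  have hpart := card_filter_add_card_filter_not (s := (univ : Finset (V × V)))
    fun p => signPattern x y p.1 = signPattern x y p.2
  have heq := card_sq_le_card_mul_card_filter_eq (signPattern x y)
  simp only [card_univ, Fintype.card_prod, Fintype.card_bool] at hpart heq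
  have h8 : 8 * (#(G.signCut x) + #(Gᶜ.signCut y)) ≤ 3 * Fintype.card V ^ 2 := by
    simp only [ne_eq] at hne
    rw [sq] at heq ⊢
    omega
  rw [le_div_iff₀ (by norm_num), mul_comm]
  exact_mod_cast h8

end SimpleGraph

section graphEig

variable {n : ℕ} (G : SimpleGraph (Fin n))

theorem graphEig_antitone : Antitone (graphEig G) :=
  fun _ _ hij => Tuple.monotone_sort _ (Fin.rev_le_rev.2 hij)

theorem sum_graphEig : ∑ i, graphEig G i = 0 := by
  let := Classical.decRel G.Adj
  set hH := G.isHermitian_adjMatrix ℝ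
  calc ∑ i, graphEig G i
      = ∑ i, hH.eigenvalues ((Fin.revPerm.trans (Tuple.sort hH.eigenvalues)) i) := rfl
    _ = (G.adjMatrix ℝ).trace := by
      rw [Equiv.sum_comp, hH.trace_eq_sum_eigenvalues]; simp
    _ = 0 := G.trace_adjMatrix ℝ

theorem graphEig_last_nonpos (h : n - 1 < n) : graphEig G ⟨n - 1, h⟩ ≤ 0 := by
  have hle : ∀ i, graphEig G ⟨n - 1, h⟩ ≤ graphEig G i :=
    fun i => graphEig_antitone G (Nat.le_sub_one_of_lt i.isLt)
  have := sum_le_sum fun i (_ : i ∈ univ) => hle i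
  rw [sum_graphEig, sum_const, card_univ, Fintype.card_fin, nsmul_eq_mul] at this
  exact nonpos_of_mul_nonpos_right this (by exact_mod_cast (by omega : 0 < n))

theorem exists_dotProduct_adjMatrix_mulVec_eq_graphEig [inst : DecidableRel G.Adj] (i : Fin n) :
    ∃ v : Fin n → ℝ, v ⬝ᵥ v = 1 ∧ v ⬝ᵥ G.adjMatrix ℝ *ᵥ v = graphEig G i := by
  obtain rfl : inst = Classical.decRel G.Adj := Subsingleton.elim _ _
  let := Classical.decRel G.Adj
  set hH := G.isHermitian_adjMatrix ℝ
  set k := Tuple.sort hH.eigenvalues i.rev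
  refine ⟨hH.eigenvectorBasis k, ?_, ?_⟩
  · have h := real_inner_self_eq_norm_sq (hH.eigenvectorBasis k)
    rw [hH.eigenvectorBasis.orthonormal.1 k, one_pow, EuclideanSpace.inner_eq_star_dotProduct] at h
    simpa using h
  · have h := hH.eigenvalues_eq k
    simp only [star_trivial, RCLike.re_to_real] at h
    exact h.symm

end graphEig

theorem stmt12 (n : ℕ) (hn : 0 < n) (G : SimpleGraph (Fin n)) :
    |graphEig G ⟨n - 1, by omega⟩| + |graphEig Gᶜ ⟨n - 1, by omega⟩| ≤
      Real.sqrt 3 / 2 * n := by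
  classical
  set μ := graphEig G ⟨n - 1, by omega⟩
  set ν := graphEig Gᶜ ⟨n - 1, by omega⟩
  obtain ⟨x, hx, hxμ⟩ := exists_dotProduct_adjMatrix_mulVec_eq_graphEig G ⟨n - 1, by omega⟩
  obtain ⟨y, hy, hyν⟩ := exists_dotProduct_adjMatrix_mulVec_eq_graphEig Gᶜ ⟨n - 1, by omega⟩
  have hμ : μ ≤ 0 := graphEig_last_nonpos G _
  have hν : ν ≤ 0 := graphEig_last_nonpos Gᶜ _
  have hμ2 : μ ^ 2 ≤ #(G.signCut x) := by
    simpa [hx, hxμ] using G.sq_dotProduct_adjMatrix_mulVec_le x (hxμ ▸ hμ)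
  have hν2 : ν ^ 2 ≤ #(Gᶜ.signCut y) := by
    simpa [hy, hyν] using Gᶜ.sq_dotProduct_adjMatrix_mulVec_le y (hyν ▸ hν)
  have hcut := G.card_signCut_add_card_signCut_compl_le x y
  rw [Fintype.card_fin] at hcut
  rw [abs_of_nonpos hμ, abs_of_nonpos hν,
    ← pow_le_pow_iff_left₀ (by linarith) (by positivity) two_ne_zero]
  calc (-μ + -ν) ^ 2 ≤ 2 * (μ ^ 2 + ν ^ 2) := by nlinarith [sq_nonneg (μ - ν)]
    _ ≤ 3 / 4 * (n : ℝ) ^ 2 := by linarith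
    _ = (Real.sqrt 3 / 2 * n) ^ 2 := by
      rw [mul_pow, div_pow, Real.sq_sqrt (by norm_num)]; ring
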